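/- arXiv:2112.13155 — 3 statements merged into one kernel-verified Lean document; each statement's English description precedes it below -/
import Mathlib

section
/- With U_ℓ(X,u) ∈ (ℚ[X])⟦u⟧ defined as in the context, let ∂_X denote the coefficientwise derivative with respect to X, and set G := e/(1−X·e) ∈ (ℚ[X])⟦u⟧ (the formal expansion of 1/(E_ℓ−X)). Then ∂_X U_ℓ(X,u) = ( log M + log(1−X·e) − ∑_{j≥1} (B_j/j)·G^j ) · U_ℓ(X,u). (This is the identity ∂_X U_ℓ(X,u) = ( log(λ_ℓ(E_ℓ−X)) + ψ₀(−E_ℓ+X) )·U_ℓ(X,u), where ψ₀(z) := −∑_{j≥1} (B_j/j)·(−z)^{−j}.) -/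
/-!
Common setup: fix a positive integer `ℓ`. In `ℚ⟦u⟧` set `λ = ℓ·u^ℓ·(1-u^ℓ)` and
`M = (1-u^ℓ)·∑_{d∣ℓ} μ(ℓ/d)·u^{ℓ-d}` (so `M = λ_ℓ E_ℓ`), `e = λ·M⁻¹ = 1/E_ℓ`.
In `A = (ℚ[X])⟦u⟧` define
`Φ = X(log M - 1) + ∑_{m≥1} X^m e^{m-1}/m + (X-1/2) log(1-Xe) + B̃(-e/(1-Xe)) - B̃(-e)`
and `U_ℓ(X,u) = exp Φ`, the formal expansion of `(-λ_ℓ)^X Γ(-E_ℓ+X)/Γ(-E_ℓ)`.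
All `exp`/`log`/`B̃`-substitutions are applied to series with zero constant term, so
the truncated coefficientwise sums below agree with the defining infinite series.
-/

open PowerSeries Finset

noncomputable section

/-- For `f` with zero constant term, this is `exp f = ∑_{k≥0} fᵏ/k!`
(truncated sum; valid since `coeff n (f^k) = 0` for `k > n`). -/
def expPS {R : Type*} [CommRing R] [Algebra ℚ R] (f : PowerSeries R) : PowerSeries R :=
  PowerSeries.mk fun n => ∑ k ∈ Finset.range (n + 1),
    algebraMap ℚ R (1 / k.factorial) * PowerSeries.coeff n (f ^ k)

/-- For `f` with zero constant term, this is `log (1+f) = ∑_{k≥1} (-1)^{k-1} fᵏ/k`. -/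
def logOnePlus {R : Type*} [CommRing R] [Algebra ℚ R] (f : PowerSeries R) : PowerSeries R :=
  PowerSeries.mk fun n => ∑ k ∈ Finset.range (n + 1),
    algebraMap ℚ R ((-1) ^ (k + 1) / k) * PowerSeries.coeff n (f ^ k)

/-- For `g` of positive order, the geometric series `∑_{k≥0} gᵏ = (1-g)⁻¹`. -/
def geomPS {R : Type*} [CommRing R] (g : PowerSeries R) : PowerSeries R :=
  PowerSeries.mk fun n => ∑ k ∈ Finset.range (n + 1), PowerSeries.coeff n (g ^ k)

/-- `B̃(g) = ∑_{r≥2} (B_r/(r(r-1))) g^{r-1}` for `g` of positive order;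
`bernoulli` is Mathlib's Bernoulli number with `B₁ = -1/2`. -/
def BtildePS {R : Type*} [CommRing R] [Algebra ℚ R] (g : PowerSeries R) : PowerSeries R :=
  PowerSeries.mk fun n => ∑ r ∈ Finset.range (n + 2),
    algebraMap ℚ R (bernoulli r / ((r : ℚ) * ((r : ℚ) - 1))) * PowerSeries.coeff n (g ^ (r - 1))

/-- `λ_ℓ = ℓ·u^ℓ·(1-u^ℓ) ∈ ℚ⟦u⟧`. -/
def lamQ (ℓ : ℕ) : PowerSeries ℚ := (ℓ : ℚ) • (PowerSeries.X ^ ℓ * (1 - PowerSeries.X ^ ℓ))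

/-- `M = λ_ℓ·E_ℓ = (1-u^ℓ)·∑_{d∣ℓ} μ(ℓ/d) u^{ℓ-d} ∈ ℚ⟦u⟧`; its constant term is `1`. -/
def MQ (ℓ : ℕ) : PowerSeries ℚ :=
  (1 - PowerSeries.X ^ ℓ) *
    ∑ d ∈ ℓ.divisors, ((ArithmeticFunction.moebius (ℓ / d) : ℤ) : ℚ) • PowerSeries.X ^ (ℓ - d)

/-- `e = 1/E_ℓ = λ·M⁻¹`, a power series of `u`-adic order `ℓ`. -/
def eQ (ℓ : ℕ) : PowerSeries ℚ := lamQ ℓ * (MQ ℓ)⁻¹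

/-- `A = (ℚ[X])⟦u⟧`. -/
abbrev A : Type := PowerSeries (Polynomial ℚ)

/-- The coefficientwise inclusion `ℚ⟦u⟧ → (ℚ[X])⟦u⟧`. -/
def ofQ : PowerSeries ℚ →+* A := PowerSeries.map (algebraMap ℚ (Polynomial ℚ))

/-- The indeterminate `X`, seen as a constant power series in `(ℚ[X])⟦u⟧`. -/
def Xc : A := PowerSeries.C Polynomial.X

/-- `∑_{m≥1} X^m e^{m-1}/m ∈ A`, written coefficientwise in `u`
(only `m ≤ n+1` contributes to the coefficient of `u^n` since `e` has positive order). -/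
def SPhi (ℓ : ℕ) : A :=
  PowerSeries.mk fun n => ∑ m ∈ Finset.range (n + 2),
    Polynomial.C (PowerSeries.coeff n (eQ ℓ ^ (m - 1)) / (m : ℚ)) * Polynomial.X ^ m

/-- `Φ = X(log M - 1) + ∑_{m≥1} X^m e^{m-1}/m + (X-1/2)·log(1-Xe) + B̃(-e/(1-Xe)) - B̃(-e)`,
where `1/(1-Xe)` is the geometric series. -/
def PhiU (ℓ : ℕ) : A :=
  Xc * (logOnePlus (ofQ (MQ ℓ) - 1) - 1) + SPhi ℓ
    + (Xc - algebraMap ℚ A (1 / 2)) * logOnePlus (-(Xc * ofQ (eQ ℓ)))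
    + BtildePS (-(ofQ (eQ ℓ) * geomPS (Xc * ofQ (eQ ℓ))))
    - BtildePS (-(ofQ (eQ ℓ)))

/-- `U_ℓ(X,u) = exp Φ ∈ (ℚ[X])⟦u⟧`, the expansion of `(-λ_ℓ)^X Γ(-E_ℓ+X)/Γ(-E_ℓ)`. -/
def Useries (ℓ : ℕ) : A := expPS (PhiU ℓ)

/-- The coefficientwise derivative `∂_X` on `A = (ℚ[X])⟦u⟧`. -/
def DX (f : A) : A :=
  PowerSeries.mk fun n => Polynomial.derivative (PowerSeries.coeff n f)

/-- `G = e/(1-Xe) ∈ (ℚ[X])⟦u⟧`, the formal expansion of `1/(E_ℓ - X)`. -/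
def Gu (ℓ : ℕ) : A := ofQ (eQ ℓ) * geomPS (Xc * ofQ (eQ ℓ))

/-- `∑_{j≥1} (B_j/j)·G^j`, written coefficientwise in `u` (valid since `G` has positive
order); this is `-ψ₀(-E_ℓ+X)`, with `ψ₀(z) = -∑_{j≥1}(B_j/j)(-z)^{-j}`. -/
def psi0Sum (ℓ : ℕ) : A :=
  PowerSeries.mk fun n => ∑ j ∈ Finset.range (n + 1),
    Polynomial.C (bernoulli j / j) * PowerSeries.coeff n (Gu ℓ ^ j)
section Aux

lemma coeff_pow_eq_zero' {R : Type*} [CommRing R] {g : PowerSeries R}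
    (hg : constantCoeff g = 0) {i k : ℕ} (h : i < k) :
    PowerSeries.coeff i (g ^ k) = 0 := by
  have hd : (PowerSeries.X : PowerSeries R) ^ k ∣ g ^ k :=
    pow_dvd_pow_of_dvd (PowerSeries.X_dvd_iff.mpr hg) k
  exact (PowerSeries.X_pow_dvd_iff.mp hd) i h

lemma coeff_mul_pow_eq_zero' {R : Type*} [CommRing R] {a g : PowerSeries R}
    (ha : constantCoeff a = 0) (hg : constantCoeff g = 0) {i k : ℕ} (h : i ≤ k) :
    PowerSeries.coeff i (a * g ^ k) = 0 := by
  have hd : (PowerSeries.X : PowerSeries R) ^ (k + 1) ∣ a * g ^ k := by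
    rw [pow_succ']
    exact mul_dvd_mul (PowerSeries.X_dvd_iff.mpr ha)
      (pow_dvd_pow_of_dvd (PowerSeries.X_dvd_iff.mpr hg) k)
  exact (PowerSeries.X_pow_dvd_iff.mp hd) i (by omega)

lemma coeff_DX (n : ℕ) (f : A) :
    PowerSeries.coeff n (DX f) = Polynomial.derivative (PowerSeries.coeff n f) :=
  PowerSeries.coeff_mk _ _

lemma DX_add (f g : A) : DX (f + g) = DX f + DX g := by
  ext n; simp [coeff_DX]

lemma DX_sub (f g : A) : DX (f - g) = DX f - DX g := by
  ext n; simp [coeff_DX]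

lemma DX_neg (f : A) : DX (-f) = -DX f := by
  ext n; simp [coeff_DX]

lemma DX_mul (f g : A) : DX (f * g) = DX f * g + f * DX g := by
  ext n
  simp only [coeff_DX, map_add, PowerSeries.coeff_mul, map_sum,
    Polynomial.derivative_mul, Finset.sum_add_distrib]

lemma DX_one : DX (1 : A) = 0 := by
  ext n
  simp only [coeff_DX, PowerSeries.coeff_one, apply_ite,
    Polynomial.derivative_one, Polynomial.derivative_zero, ite_self, map_zero]

lemma DX_pow (g : A) (k : ℕ) : DX (g ^ (k + 1)) = (k + 1) • (g ^ k * DX g) := by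
  induction k with
  | zero => simp [DX_mul, pow_succ, pow_zero, one_mul, DX_one]
  | succ k ih =>
      rw [pow_succ, DX_mul, ih, smul_mul_assoc, mul_assoc, mul_comm (DX g) g, ← mul_assoc,
        ← pow_succ, succ_nsmul (g ^ (k+1) * DX g) (k+1)]

lemma DX_ofQ (x : PowerSeries ℚ) : DX (ofQ x) = 0 := by
  ext n
  simp [coeff_DX, ofQ, PowerSeries.coeff_map, Polynomial.algebraMap_eq]

lemma DX_Xc : DX Xc = 1 := by
  ext n
  simp [coeff_DX, Xc, PowerSeries.coeff_C, PowerSeries.coeff_one, apply_ite]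

lemma DX_algebraMap (q : ℚ) : DX (algebraMap ℚ A q) = 0 := by
  ext n
  simp [coeff_DX, PowerSeries.algebraMap_apply, Polynomial.algebraMap_eq,
    PowerSeries.coeff_C, apply_ite]

lemma coeff_mul_congr {a a' b b' : A} {N : ℕ}
    (ha : ∀ i ≤ N, PowerSeries.coeff i a = PowerSeries.coeff i a')
    (hb : ∀ i ≤ N, PowerSeries.coeff i b = PowerSeries.coeff i b') :
    ∀ i ≤ N, PowerSeries.coeff i (a * b) = PowerSeries.coeff i (a' * b') := by
  intro i hi
  rw [PowerSeries.coeff_mul, PowerSeries.coeff_mul]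
  refine Finset.sum_congr rfl fun p hp => ?_
  rw [Finset.HasAntidiagonal.mem_antidiagonal] at hp
  rw [ha p.1 (by omega), hb p.2 (by omega)]

end Aux
section Aux2

lemma algebraMap_A_eq (q : ℚ) : algebraMap ℚ A q = PowerSeries.C (Polynomial.C q) := by
  simp only [PowerSeries.algebraMap_apply, Polynomial.algebraMap_eq]

lemma coeff_algebraMap_mul (q : ℚ) (f : A) (n : ℕ) :
    PowerSeries.coeff n (algebraMap ℚ A q * f) = Polynomial.C q * PowerSeries.coeff n f := by
  rw [algebraMap_A_eq, PowerSeries.coeff_C_mul]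

lemma coeff_ofQ (x : PowerSeries ℚ) (n : ℕ) :
    PowerSeries.coeff n (ofQ x) = Polynomial.C (PowerSeries.coeff n x) := by
  simp [ofQ, PowerSeries.coeff_map, Polynomial.algebraMap_eq]

lemma constantCoeff_ofQ (x : PowerSeries ℚ) :
    constantCoeff (ofQ x) = Polynomial.C (constantCoeff x) := by
  rw [← PowerSeries.coeff_zero_eq_constantCoeff_apply, coeff_ofQ,
    PowerSeries.coeff_zero_eq_constantCoeff_apply]

lemma constantCoeff_eQ {ℓ : ℕ} (hℓ : 1 ≤ ℓ) : constantCoeff (eQ ℓ) = 0 := by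
  have h1 : constantCoeff (lamQ ℓ) = 0 := by
    simp [lamQ, map_smul, map_mul, map_pow, zero_pow (by omega : ℓ ≠ 0)]
  rw [eQ, map_mul, h1, zero_mul]

lemma constantCoeff_MQ {ℓ : ℕ} (hℓ : 1 ≤ ℓ) : constantCoeff (MQ ℓ) = 1 := by
  rw [MQ, map_mul, map_sub, map_one, map_pow, PowerSeries.constantCoeff_X,
    zero_pow (by omega : ℓ ≠ 0), sub_zero, one_mul, map_sum]
  rw [Finset.sum_eq_single ℓ]
  · simp [Nat.div_self (by omega : 0 < ℓ)]
  · intro d hd hdne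
    rw [Nat.mem_divisors] at hd
    have hdle : d ≤ ℓ := Nat.le_of_dvd (by omega) hd.1
    have : ℓ - d ≠ 0 := by
      rcases lt_or_eq_of_le hdle with h | h
      · omega
      · exact absurd h hdne
    simp [map_smul, map_pow, zero_pow this]
  · intro h
    exact absurd (Nat.mem_divisors.mpr ⟨dvd_refl ℓ, by omega⟩) h

lemma constantCoeff_eA {ℓ : ℕ} (hℓ : 1 ≤ ℓ) : constantCoeff (ofQ (eQ ℓ)) = 0 := by
  rw [constantCoeff_ofQ, constantCoeff_eQ hℓ, map_zero]

lemma constantCoeff_h {ℓ : ℕ} (hℓ : 1 ≤ ℓ) :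
    constantCoeff (Xc * ofQ (eQ ℓ)) = 0 := by
  rw [map_mul, constantCoeff_eA hℓ, mul_zero]

lemma constantCoeff_Gu {ℓ : ℕ} (hℓ : 1 ≤ ℓ) : constantCoeff (Gu ℓ) = 0 := by
  rw [Gu, map_mul, constantCoeff_eA hℓ, zero_mul]

lemma constantCoeff_logArgM {ℓ : ℕ} (hℓ : 1 ≤ ℓ) :
    constantCoeff (ofQ (MQ ℓ) - 1) = 0 := by
  rw [map_sub, map_one, constantCoeff_ofQ, constantCoeff_MQ hℓ, map_one, sub_self]

lemma neg_pow_bernoulli (r : ℕ) : (-1 : ℚ) ^ r * bernoulli (r + 2) = bernoulli (r + 2) := by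
  rcases Nat.even_or_odd r with h | h
  · rw [h.neg_one_pow, one_mul]
  · have h2 : Odd (r + 2) := by
      rcases h with ⟨m, hm⟩; exact ⟨m + 1, by omega⟩
    have : bernoulli (r + 2) = 0 := by
      rw [bernoulli_eq_bernoulli'_of_ne_one (by omega),
        bernoulli'_eq_zero_of_odd h2 (by omega)]
    rw [this, mul_zero]

/-- Generic truncation: a coefficientwise substitution series agrees with the finite
partial sum up to degree `N`. -/
lemma trunc_gen (c : ℕ → ℚ) (ι : ℕ → ℕ) (s : ℕ) (hs : ∀ k, k < ι k + s)
    {f : A} (hf : PowerSeries.constantCoeff f = 0) {N i : ℕ} (hi : i ≤ N) :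
    PowerSeries.coeff i (PowerSeries.mk fun n => ∑ k ∈ Finset.range (n + s),
        algebraMap ℚ (Polynomial ℚ) (c k) * PowerSeries.coeff n (f ^ ι k))
      = PowerSeries.coeff i
          (∑ k ∈ Finset.range (N + s), algebraMap ℚ A (c k) * f ^ ι k) := by
  rw [PowerSeries.coeff_mk, map_sum]
  simp_rw [coeff_algebraMap_mul, Polynomial.algebraMap_eq]
  apply Finset.sum_subset
  · exact Finset.range_subset_range.mpr (by omega)
  · intro k hk hk'
    rw [Finset.mem_range] at hk hk'
    have : i < ι k := by have := hs k; omega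
    rw [coeff_pow_eq_zero' hf this, mul_zero]

lemma trunc_geom {g : A} (hg : PowerSeries.constantCoeff g = 0) {N i : ℕ} (hi : i ≤ N) :
    PowerSeries.coeff i (geomPS g)
      = PowerSeries.coeff i (∑ k ∈ Finset.range (N + 1), g ^ k) := by
  rw [geomPS, PowerSeries.coeff_mk, map_sum]
  apply Finset.sum_subset
  · exact Finset.range_subset_range.mpr (by omega)
  · intro k hk hk'
    rw [Finset.mem_range] at hk hk'
    exact coeff_pow_eq_zero' hg (by omega)

lemma one_sub_mul_geom {g : A} (hg : PowerSeries.constantCoeff g = 0) :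
    (1 - g) * geomPS g = 1 := by
  ext n
  have h1 := coeff_mul_congr (a := 1 - g) (a' := 1 - g) (b := geomPS g)
    (b' := ∑ k ∈ Finset.range (n + 1), g ^ k) (N := n)
    (fun i _ => rfl) (fun i hi => trunc_geom hg hi) n le_rfl
  rw [h1]
  have h2 : (1 - g) * ∑ k ∈ Finset.range (n + 1), g ^ k = 1 - g ^ (n + 1) := by
    have := geom_sum_mul g (n + 1)
    have h3 : (∑ i ∈ Finset.range (n+1), g ^ i) * (g - 1) = g ^ (n+1) - 1 := this
    calc (1 - g) * ∑ k ∈ Finset.range (n + 1), g ^ k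
        = -((∑ i ∈ Finset.range (n+1), g ^ i) * (g - 1)) := by ring
      _ = -(g ^ (n+1) - 1) := by rw [h3]
      _ = 1 - g ^ (n + 1) := by ring
  rw [h2, map_sub, coeff_pow_eq_zero' hg (by omega), sub_zero]

lemma geom_sub_one {g : A} (hg : PowerSeries.constantCoeff g = 0) :
    g * geomPS g = geomPS g - 1 := by
  have h := one_sub_mul_geom hg
  calc g * geomPS g = geomPS g - (1 - g) * geomPS g := by ring
    _ = geomPS g - 1 := by rw [h]

lemma DX_geom {g : A} (hg : PowerSeries.constantCoeff g = 0) :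
    DX (geomPS g) = DX g * geomPS g ^ 2 := by
  have h := one_sub_mul_geom hg
  have hD : DX ((1 - g) * geomPS g) = 0 := by rw [h, DX_one]
  rw [DX_mul, DX_sub, DX_one, zero_sub, neg_mul] at hD
  have h2 : (1 - g) * DX (geomPS g) = DX g * geomPS g := by linear_combination hD
  calc DX (geomPS g) = ((1 - g) * geomPS g) * DX (geomPS g) := by rw [h]; ring
    _ = geomPS g * ((1 - g) * DX (geomPS g)) := by ring
    _ = geomPS g * (DX g * geomPS g) := by rw [h2]
    _ = DX g * geomPS g ^ 2 := by ring

end Aux2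
section Aux3

lemma constantCoeff_DX {f : A} (hf : PowerSeries.constantCoeff f = 0) :
    PowerSeries.constantCoeff (DX f) = 0 := by
  rw [← PowerSeries.coeff_zero_eq_constantCoeff_apply] at hf ⊢
  rw [coeff_DX, hf, Polynomial.derivative_zero]

lemma derivative_coeff_pow_succ (f : A) (k n : ℕ) :
    Polynomial.derivative (PowerSeries.coeff n (f ^ (k + 1)))
      = Polynomial.C ((k : ℚ) + 1) * PowerSeries.coeff n (f ^ k * DX f) := by
  rw [← coeff_DX, DX_pow, map_nsmul, nsmul_eq_mul]
  congr 1
  push_cast [Polynomial.C_eq_natCast]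
  norm_cast

lemma fact_const (k : ℕ) :
    (1 / ((k + 1).factorial : ℚ)) * ((k : ℚ) + 1) = 1 / (k.factorial : ℚ) := by
  have h1 : ((k.factorial : ℚ)) ≠ 0 := Nat.cast_ne_zero.mpr (Nat.factorial_ne_zero k)
  have h2 : ((k : ℚ) + 1) ≠ 0 := by positivity
  rw [Nat.factorial_succ]
  push_cast
  field_simp

lemma DX_expPS {f : A} (hf : PowerSeries.constantCoeff f = 0) :
    DX (expPS f) = DX f * expPS f := by
  have hDf : PowerSeries.constantCoeff (DX f) = 0 := constantCoeff_DX hf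
  ext n
  have hR : PowerSeries.coeff n (DX f * expPS f)
      = PowerSeries.coeff n (DX f * ∑ k ∈ Finset.range (n + 1),
          algebraMap ℚ A (1 / k.factorial) * f ^ k) :=
    coeff_mul_congr (fun i _ => rfl)
      (fun i hi => trunc_gen (fun k => 1 / k.factorial) (fun k => k) 1
        (fun k => Nat.lt_succ_self k) hf hi) n le_rfl
  rw [hR, coeff_DX]
  simp only [expPS, PowerSeries.coeff_mk]
  rw [map_sum]
  simp_rw [Polynomial.algebraMap_eq, Polynomial.derivative_C_mul]
  rw [Finset.sum_range_succ']
  simp_rw [derivative_coeff_pow_succ]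
  -- kill the k = 0 term
  rw [pow_zero]
  simp only [PowerSeries.coeff_one, apply_ite Polynomial.derivative,
    Polynomial.derivative_one, Polynomial.derivative_zero, ite_self, mul_zero, add_zero]
  -- combine constants on the left
  have hc : ∀ k ∈ Finset.range n,
      Polynomial.C ((1 : ℚ) / (k + 1).factorial)
          * (Polynomial.C ((k : ℚ) + 1) * PowerSeries.coeff n (f ^ k * DX f))
        = Polynomial.C ((1 : ℚ) / k.factorial) * PowerSeries.coeff n (f ^ k * DX f) := by
    intro k _
    rw [← mul_assoc, ← Polynomial.C_mul, fact_const]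
  rw [Finset.sum_congr rfl hc]
  -- now the right-hand side
  rw [Finset.mul_sum, map_sum]
  have hr : ∀ k : ℕ,
      PowerSeries.coeff n (DX f * (algebraMap ℚ A (1 / k.factorial) * f ^ k))
        = Polynomial.C ((1 : ℚ) / k.factorial) * PowerSeries.coeff n (f ^ k * DX f) := by
    intro k
    rw [show DX f * (algebraMap ℚ A (1 / k.factorial) * f ^ k)
        = algebraMap ℚ A (1 / k.factorial) * (f ^ k * DX f) by ring,
      coeff_algebraMap_mul]
  simp_rw [hr]
  rw [Finset.sum_range_succ]
  have hz : PowerSeries.coeff n (f ^ n * DX f) = 0 := by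
    rw [mul_comm]
    exact coeff_mul_pow_eq_zero' hDf hf le_rfl
  rw [hz, mul_zero, add_zero]

end Aux3
section Aux4

lemma DX_logOnePlus {g : A} (hg : PowerSeries.constantCoeff g = 0) :
    DX (logOnePlus g) = DX g * geomPS (-g) := by
  have hDg := constantCoeff_DX hg
  have hng : PowerSeries.constantCoeff (-g) = 0 := by rw [map_neg, hg, neg_zero]
  refine PowerSeries.ext fun n => ?_
  have hR : PowerSeries.coeff n (DX g * geomPS (-g))
      = PowerSeries.coeff n (DX g * ∑ k ∈ Finset.range (n + 1), (-g) ^ k) :=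
    coeff_mul_congr (fun i _ => rfl) (fun i hi => trunc_geom hng hi) n le_rfl
  rw [hR, coeff_DX]
  simp only [logOnePlus, PowerSeries.coeff_mk]
  rw [map_sum]
  simp_rw [Polynomial.algebraMap_eq, Polynomial.derivative_C_mul]
  rw [Finset.sum_range_succ']
  simp_rw [derivative_coeff_pow_succ]
  rw [pow_zero]
  simp only [PowerSeries.coeff_one, apply_ite Polynomial.derivative,
    Polynomial.derivative_one, Polynomial.derivative_zero, ite_self, mul_zero, add_zero]
  -- right-hand side
  have hterm : ∀ k : ℕ, DX g * (-g) ^ k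
      = algebraMap ℚ A ((-1) ^ k) * (g ^ k * DX g) := by
    intro k
    rw [map_pow, map_neg, map_one, neg_pow]
    ring
  rw [Finset.mul_sum, map_sum]
  simp_rw [hterm, coeff_algebraMap_mul]
  rw [Finset.sum_range_succ]
  have hz : PowerSeries.coeff n (g ^ n * DX g) = 0 := by
    rw [mul_comm]; exact coeff_mul_pow_eq_zero' hDg hg le_rfl
  rw [hz, mul_zero, add_zero]
  refine Finset.sum_congr rfl fun k _ => ?_
  rw [← mul_assoc, ← Polynomial.C_mul]
  congr 1
  have hne : ((k : ℚ) + 1) ≠ 0 := by positivity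
  push_cast
  field_simp
  ring

/-- `∑_{r≥0} (B_{r+2}/(r+2)) g^r`. -/
def BSser (g : A) : A :=
  PowerSeries.mk fun n => ∑ r ∈ Finset.range (n + 1),
    algebraMap ℚ (Polynomial ℚ) (bernoulli (r + 2) / ((r : ℚ) + 2))
      * PowerSeries.coeff n (g ^ r)

lemma DX_BtildePS {g : A} (hg : PowerSeries.constantCoeff g = 0) :
    DX (BtildePS g) = DX g * BSser g := by
  have hDg := constantCoeff_DX hg
  refine PowerSeries.ext fun n => ?_
  have hR : PowerSeries.coeff n (DX g * BSser g)
      = PowerSeries.coeff n (DX g * ∑ r ∈ Finset.range (n + 1),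
          algebraMap ℚ A (bernoulli (r + 2) / ((r : ℚ) + 2)) * g ^ r) :=
    coeff_mul_congr (fun i _ => rfl)
      (fun i hi => trunc_gen (fun r => bernoulli (r + 2) / ((r : ℚ) + 2)) (fun r => r) 1
        (fun k => Nat.lt_succ_self k) hg hi) n le_rfl
  rw [hR, coeff_DX]
  simp only [BtildePS, PowerSeries.coeff_mk]
  rw [map_sum]
  simp_rw [Polynomial.algebraMap_eq, Polynomial.derivative_C_mul]
  rw [Finset.sum_range_succ']
  have ht0 : Polynomial.C (bernoulli 0 / ((0 : ℕ) * ((0 : ℕ) - 1) : ℚ))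
      * Polynomial.derivative (PowerSeries.coeff n (g ^ (0 - 1))) = 0 := by
    norm_num
  rw [ht0, add_zero]
  simp only [Nat.add_sub_cancel]
  rw [Finset.sum_range_succ']
  have ht1 : Polynomial.C (bernoulli 1 / ((0 + 1 : ℕ) * ((0 + 1 : ℕ) - 1) : ℚ))
      * Polynomial.derivative (PowerSeries.coeff n (g ^ 0)) = 0 := by
    norm_num
  rw [ht1, add_zero]
  simp_rw [derivative_coeff_pow_succ]
  -- right-hand side
  rw [Finset.mul_sum, map_sum]
  have hterm : ∀ r : ℕ,
      PowerSeries.coeff n (DX g * (algebraMap ℚ A (bernoulli (r + 2) / ((r : ℚ) + 2)) * g ^ r))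
        = Polynomial.C (bernoulli (r + 2) / ((r : ℚ) + 2))
            * PowerSeries.coeff n (g ^ r * DX g) := by
    intro r
    rw [show DX g * (algebraMap ℚ A (bernoulli (r + 2) / ((r : ℚ) + 2)) * g ^ r)
        = algebraMap ℚ A (bernoulli (r + 2) / ((r : ℚ) + 2)) * (g ^ r * DX g) by ring,
      coeff_algebraMap_mul]
  simp_rw [hterm]
  rw [Finset.sum_range_succ]
  have hz : PowerSeries.coeff n (g ^ n * DX g) = 0 := by
    rw [mul_comm]; exact coeff_mul_pow_eq_zero' hDg hg le_rfl
  rw [hz, mul_zero, add_zero]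
  refine Finset.sum_congr rfl fun r _ => ?_
  rw [← mul_assoc, ← Polynomial.C_mul]
  congr 1
  have h1 : ((r : ℚ) + 1) ≠ 0 := by positivity
  have h2 : ((r : ℚ) + 2) ≠ 0 := by positivity
  congr 1
  push_cast
  field_simp
  ring

end Aux4
section Aux5

lemma DX_SPhi (ℓ : ℕ) : DX (SPhi ℓ) = geomPS (Xc * ofQ (eQ ℓ)) := by
  refine PowerSeries.ext fun n => ?_
  rw [coeff_DX]
  simp only [SPhi, PowerSeries.coeff_mk]
  rw [map_sum]
  simp_rw [Polynomial.derivative_C_mul_X_pow]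
  rw [Finset.sum_range_succ']
  rw [show Polynomial.C (PowerSeries.coeff n (eQ ℓ ^ (0 - 1)) / ((0 : ℕ) : ℚ) * ((0 : ℕ) : ℚ))
      * Polynomial.X ^ (0 - 1) = 0 by norm_num]
  rw [add_zero]
  rw [geomPS, PowerSeries.coeff_mk]
  have hterm : ∀ k : ℕ, PowerSeries.coeff n ((Xc * ofQ (eQ ℓ)) ^ k)
      = Polynomial.X ^ k * Polynomial.C (PowerSeries.coeff n (eQ ℓ ^ k)) := by
    intro k
    rw [mul_pow, ← map_pow ofQ, show (Xc : A) ^ k = PowerSeries.C (Polynomial.X ^ k) by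
      rw [Xc, ← map_pow]]
    rw [PowerSeries.coeff_C_mul, coeff_ofQ]
  simp_rw [hterm]
  refine Finset.sum_congr rfl fun m _ => ?_
  have h1 : ((m : ℚ) + 1) ≠ 0 := by positivity
  have h2 : (m + 1) - 1 = m := by omega
  rw [h2]
  rw [mul_comm (Polynomial.X ^ m)]
  congr 1
  push_cast
  field_simp

lemma psi0_eq {ℓ : ℕ} (hℓ : 1 ≤ ℓ) :
    psi0Sum ℓ = algebraMap ℚ A (-(1/2)) * Gu ℓ + Gu ℓ ^ 2 * BSser (-(Gu ℓ)) := by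
  have hG : PowerSeries.constantCoeff (Gu ℓ) = 0 := constantCoeff_Gu hℓ
  have hnG : PowerSeries.constantCoeff (-(Gu ℓ)) = 0 := by rw [map_neg, hG, neg_zero]
  refine PowerSeries.ext fun n => ?_
  -- RHS second factor truncation
  have hR : PowerSeries.coeff n (Gu ℓ ^ 2 * BSser (-(Gu ℓ)))
      = PowerSeries.coeff n (Gu ℓ ^ 2 * ∑ r ∈ Finset.range (n + 1),
          algebraMap ℚ A (bernoulli (r + 2) / ((r : ℚ) + 2)) * (-(Gu ℓ)) ^ r) :=
    coeff_mul_congr (fun i _ => rfl)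
      (fun i hi => trunc_gen (fun r => bernoulli (r + 2) / ((r : ℚ) + 2)) (fun r => r) 1
        (fun k => Nat.lt_succ_self k) hnG hi) n le_rfl
  rw [map_add, hR, coeff_algebraMap_mul]
  rw [Finset.mul_sum, map_sum]
  have hterm : ∀ r : ℕ,
      PowerSeries.coeff n (Gu ℓ ^ 2 * (algebraMap ℚ A (bernoulli (r + 2) / ((r : ℚ) + 2))
          * (-(Gu ℓ)) ^ r))
        = Polynomial.C (bernoulli (r + 2) / ((r : ℚ) + 2))
            * PowerSeries.coeff n (Gu ℓ ^ (r + 2)) := by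
    intro r
    have : Gu ℓ ^ 2 * (algebraMap ℚ A (bernoulli (r + 2) / ((r : ℚ) + 2)) * (-(Gu ℓ)) ^ r)
        = algebraMap ℚ A (((-1) ^ r) * (bernoulli (r + 2) / ((r : ℚ) + 2))) * Gu ℓ ^ (r + 2) := by
      rw [map_mul, map_pow, map_neg, map_one, neg_pow]
      ring
    rw [this, show ((-1 : ℚ) ^ r) * (bernoulli (r + 2) / ((r : ℚ) + 2))
        = bernoulli (r + 2) / ((r : ℚ) + 2) by
      rw [← mul_div_assoc, neg_pow_bernoulli], coeff_algebraMap_mul]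
  simp_rw [hterm]
  -- LHS : extend the sum to range (n + 3)
  simp only [psi0Sum, PowerSeries.coeff_mk]
  rw [show (∑ j ∈ Finset.range (n + 1),
        Polynomial.C (bernoulli j / (j : ℚ)) * PowerSeries.coeff n (Gu ℓ ^ j))
      = ∑ j ∈ Finset.range (n + 3),
        Polynomial.C (bernoulli j / (j : ℚ)) * PowerSeries.coeff n (Gu ℓ ^ j) by
    apply Finset.sum_subset (Finset.range_subset_range.mpr (by omega))
    intro j hj hj'
    rw [Finset.mem_range] at hj hj'
    rw [coeff_pow_eq_zero' hG (by omega), mul_zero]]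
  rw [Finset.sum_range_succ', Finset.sum_range_succ']
  rw [show Polynomial.C (bernoulli 0 / ((0 : ℕ) : ℚ))
      * PowerSeries.coeff n (Gu ℓ ^ 0) = 0 by norm_num]
  rw [add_zero]
  rw [show Polynomial.C (bernoulli (0 + 1) / ((0 + 1 : ℕ) : ℚ))
      * PowerSeries.coeff n (Gu ℓ ^ (0 + 1)) =
      Polynomial.C (-(1/2) : ℚ) * PowerSeries.coeff n (Gu ℓ) by norm_num [bernoulli_one]]
  rw [add_comm]
  congr 1
  refine Finset.sum_congr rfl fun j _ => ?_
  congr 2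
  push_cast
  ring

lemma constantCoeff_logOnePlus (f : A) :
    PowerSeries.constantCoeff (logOnePlus f) = 0 := by
  rw [← PowerSeries.coeff_zero_eq_constantCoeff_apply]
  simp [logOnePlus, PowerSeries.coeff_mk]

lemma constantCoeff_BtildePS (f : A) :
    PowerSeries.constantCoeff (BtildePS f) = 0 := by
  rw [← PowerSeries.coeff_zero_eq_constantCoeff_apply]
  simp [BtildePS, PowerSeries.coeff_mk, Finset.sum_range_succ]

lemma constantCoeff_SPhi (ℓ : ℕ) :
    PowerSeries.constantCoeff (SPhi ℓ) = Polynomial.X := by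
  rw [← PowerSeries.coeff_zero_eq_constantCoeff_apply]
  simp [SPhi, PowerSeries.coeff_mk, Finset.sum_range_succ]

lemma constantCoeff_PhiU {ℓ : ℕ} (hℓ : 1 ≤ ℓ) :
    PowerSeries.constantCoeff (PhiU ℓ) = 0 := by
  rw [PhiU]
  rw [map_sub, map_add, map_add, map_add, map_mul, map_mul, map_sub, map_sub, map_one]
  rw [constantCoeff_logOnePlus, constantCoeff_logOnePlus, constantCoeff_BtildePS,
    constantCoeff_BtildePS, constantCoeff_SPhi]
  rw [show PowerSeries.constantCoeff (Xc : A) = Polynomial.X from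
    PowerSeries.constantCoeff_C _]
  ring

end Aux5

/-- `∂_X U_ℓ(X,u) = (log M + log(1-Xe) - ∑_{j≥1}(B_j/j)G^j)·U_ℓ(X,u)`, i.e.
`∂_X U_ℓ(X,u) = (log(λ_ℓ(E_ℓ-X)) + ψ₀(-E_ℓ+X))·U_ℓ(X,u)`. -/
theorem statement2 (ℓ : ℕ) (hℓ : 1 ≤ ℓ) :
    DX (Useries ℓ)
      = (logOnePlus (ofQ (MQ ℓ) - 1) + logOnePlus (-(Xc * ofQ (eQ ℓ))) - psi0Sum ℓ)
          * Useries ℓ := by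
  have hΦ := constantCoeff_PhiU hℓ
  rw [Useries, DX_expPS hΦ]
  congr 1
  -- it remains to compute `DX (PhiU ℓ)`
  have heA : PowerSeries.constantCoeff (ofQ (eQ ℓ)) = 0 := constantCoeff_eA hℓ
  have hneA : PowerSeries.constantCoeff (-(ofQ (eQ ℓ))) = 0 := by rw [map_neg, heA, neg_zero]
  have hh : PowerSeries.constantCoeff (Xc * ofQ (eQ ℓ)) = 0 := constantCoeff_h hℓ
  have hnh : PowerSeries.constantCoeff (-(Xc * ofQ (eQ ℓ))) = 0 := by
    rw [map_neg, hh, neg_zero]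
  have hM0 : PowerSeries.constantCoeff (ofQ (MQ ℓ) - 1) = 0 := constantCoeff_logArgM hℓ
  have hG : PowerSeries.constantCoeff (Gu ℓ) = 0 := constantCoeff_Gu hℓ
  have hnG : PowerSeries.constantCoeff (-(Gu ℓ)) = 0 := by rw [map_neg, hG, neg_zero]
  -- basic derivatives
  have hDh : DX (Xc * ofQ (eQ ℓ)) = ofQ (eQ ℓ) := by
    rw [DX_mul, DX_Xc, DX_ofQ, one_mul, mul_zero, add_zero]
  have hDLM : DX (logOnePlus (ofQ (MQ ℓ) - 1)) = 0 := by
    rw [DX_logOnePlus hM0, DX_sub, DX_ofQ, DX_one, sub_zero, zero_mul]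
  have hDL : DX (logOnePlus (-(Xc * ofQ (eQ ℓ)))) = -(Gu ℓ) := by
    rw [DX_logOnePlus hnh, DX_neg, hDh, neg_neg, neg_mul, Gu]
  have hDG : DX (Gu ℓ) = Gu ℓ ^ 2 := by
    rw [Gu, DX_mul, DX_ofQ, zero_mul, zero_add, DX_geom hh, hDh]
    ring
  have hDB1 : DX (BtildePS (-(ofQ (eQ ℓ) * geomPS (Xc * ofQ (eQ ℓ)))))
      = -(Gu ℓ ^ 2) * BSser (-(Gu ℓ)) := by
    rw [show (ofQ (eQ ℓ) * geomPS (Xc * ofQ (eQ ℓ))) = Gu ℓ from rfl,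
      DX_BtildePS hnG, DX_neg, hDG, neg_mul]
  have hDB2 : DX (BtildePS (-(ofQ (eQ ℓ)))) = 0 := by
    rw [DX_BtildePS hneA, DX_neg, DX_ofQ, neg_zero, zero_mul]
  have hgeom1 : geomPS (Xc * ofQ (eQ ℓ)) - 1 = Xc * Gu ℓ := by
    rw [Gu, ← mul_assoc, geom_sub_one hh]
  have hhalf : algebraMap ℚ A (-(1/2)) = -(algebraMap ℚ A (1/2)) := by
    rw [map_neg]
  rw [PhiU]
  simp only [DX_sub, DX_add, DX_mul, DX_Xc, DX_algebraMap, DX_one, hDLM, hDL, hDB1, hDB2,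
    DX_SPhi]
  rw [psi0_eq hℓ]
  linear_combination hgeom1 + Gu ℓ * hhalf

end
end

section
/- With U_ℓ(X,u) ∈ (ℚ[X])⟦u⟧ defined as in the context, let ∂_X denote the coefficientwise derivative with respect to X, and set G := e/(1−X·e) ∈ (ℚ[X])⟦u⟧ (the formal expansion of 1/(E_ℓ−X)). Then ∂_X² U_ℓ(X,u) = ( ( log M + log(1−X·e) − ∑_{j≥1} (B_j/j)·G^j )² − ∑_{j≥0} B_j·G^{j+1} ) · U_ℓ(X,u). (This is the identity ∂_X² U_ℓ(X,u) = ( (log(λ_ℓ(E_ℓ−X)) + ψ₀(−E_ℓ+X))² + ψ₁(−E_ℓ+X) )·U_ℓ(X,u), where ψ₀(z) := −∑_{j≥1} (B_j/j)·(−z)^{−j} and ψ₁(z) := −∑_{j≥0} B_j·(−z)^{−j−1}.) -/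
/-!
Common setup: fix a positive integer `ℓ`. In `ℚ⟦u⟧` set `λ = ℓ·u^ℓ·(1-u^ℓ)` and
`M = (1-u^ℓ)·∑_{d∣ℓ} μ(ℓ/d)·u^{ℓ-d}` (so `M = λ_ℓ E_ℓ`), `e = λ·M⁻¹ = 1/E_ℓ`.
In `A = (ℚ[X])⟦u⟧` define
`Φ = X(log M - 1) + ∑_{m≥1} X^m e^{m-1}/m + (X-1/2) log(1-Xe) + B̃(-e/(1-Xe)) - B̃(-e)`
and `U_ℓ(X,u) = exp Φ`, the formal expansion of `(-λ_ℓ)^X Γ(-E_ℓ+X)/Γ(-E_ℓ)`.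
All `exp`/`log`/`B̃`-substitutions are applied to series with zero constant term, so
the truncated coefficientwise sums below agree with the defining infinite series.
-/

open PowerSeries Finset

noncomputable section

/-- `∑_{j≥0} B_j·G^{j+1}`, written coefficientwise in `u`; this is `-ψ₁(-E_ℓ+X)`, with
`ψ₁(z) = -∑_{j≥0} B_j (-z)^{-j-1}`. -/
def psi1Sum (ℓ : ℕ) : A :=
  PowerSeries.mk fun n => ∑ j ∈ Finset.range (n + 1),
    Polynomial.C (bernoulli j) * PowerSeries.coeff n (Gu ℓ ^ (j + 1))

namespace St3
open Polynomial
-- === auxiliary development ===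




lemma coeff_DX (n : ℕ) (f : A) :
    PowerSeries.coeff n (DX f) = derivative (PowerSeries.coeff n f) := by
  simp [DX]

lemma DX_add (f g : A) : DX (f + g) = DX f + DX g := by
  ext n; simp [coeff_DX]

lemma DX_neg (f : A) : DX (-f) = -DX f := by
  ext n; simp [coeff_DX]

lemma DX_sub (f g : A) : DX (f - g) = DX f - DX g := by
  ext n; simp [coeff_DX]

lemma DX_mul (f g : A) : DX (f * g) = DX f * g + f * DX g := by
  ext n
  simp only [coeff_DX, PowerSeries.coeff_mul, map_sum, derivative_mul, map_add,
    Finset.sum_add_distrib]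

lemma DX_one : DX (1 : A) = 0 := by
  ext n; simp [coeff_DX, PowerSeries.coeff_one]; split <;> simp

lemma DX_Xc : DX Xc = 1 := by
  ext n
  simp only [coeff_DX, Xc, PowerSeries.coeff_C, PowerSeries.coeff_one]
  split <;> simp

lemma DX_ofQ (h : PowerSeries ℚ) : DX (ofQ h) = 0 := by
  ext n
  simp [coeff_DX, ofQ, PowerSeries.coeff_map, Polynomial.algebraMap_eq]

lemma DX_algebraMap (q : ℚ) : DX (algebraMap ℚ A q) = 0 := by
  ext n
  rw [PowerSeries.algebraMap_apply]
  simp only [coeff_DX, PowerSeries.coeff_C]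
  split <;> simp [Polynomial.algebraMap_eq]

lemma coeff_pow_of_lt {f : A} (hf : PowerSeries.constantCoeff f = 0) :
    ∀ {k n : ℕ}, n < k → PowerSeries.coeff n (f ^ k) = 0 := by
  intro k
  induction k with
  | zero => intro n hn; omega
  | succ k ih =>
    intro n hn
    rw [pow_succ, PowerSeries.coeff_mul]
    apply Finset.sum_eq_zero
    intro p hp
    rw [Finset.HasAntidiagonal.mem_antidiagonal] at hp
    rcases lt_or_ge p.1 k with h | h
    · rw [ih h, zero_mul]
    · have h1 : p.1 = k := by omega
      have h2 : p.2 = 0 := by omega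
      rw [h2, PowerSeries.coeff_zero_eq_constantCoeff, hf, mul_zero]

lemma coeff_pow_mul_of_le {f g : A} (hf : PowerSeries.constantCoeff f = 0)
    (hg : PowerSeries.constantCoeff g = 0) {n k : ℕ} (h : n ≤ k) :
    PowerSeries.coeff n (f ^ k * g) = 0 := by
  rw [PowerSeries.coeff_mul]
  apply Finset.sum_eq_zero
  intro p hp
  rw [Finset.HasAntidiagonal.mem_antidiagonal] at hp
  rcases lt_or_ge p.1 k with h1 | h1
  · rw [coeff_pow_of_lt hf h1, zero_mul]
  · have h2 : p.2 = 0 := by omega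
    rw [h2, PowerSeries.coeff_zero_eq_constantCoeff, hg, mul_zero]





/-- generic truncated substitution series -/
def mkS (a : ℕ → ℚ) (f : A) : A :=
  PowerSeries.mk fun n => ∑ k ∈ Finset.range (n + 1),
    Polynomial.C (a k) * PowerSeries.coeff n (f ^ k)

lemma coeff_mkS (a : ℕ → ℚ) (f : A) (n : ℕ) :
    PowerSeries.coeff n (mkS a f) = ∑ k ∈ Finset.range (n + 1),
      Polynomial.C (a k) * PowerSeries.coeff n (f ^ k) := by
  simp [mkS]

lemma mkS_congr {a b : ℕ → ℚ} (f : A) (h : ∀ k, a k = b k) : mkS a f = mkS b f := by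
  apply PowerSeries.ext; intro n; simp only [coeff_mkS]
  exact Finset.sum_congr rfl fun k _ => by rw [h k]

lemma coeff_mkS_ext {f : A} (hf : PowerSeries.constantCoeff f = 0) (a : ℕ → ℚ)
    {n N : ℕ} (h : n < N) :
    PowerSeries.coeff n (mkS a f) = ∑ k ∈ Finset.range N,
      Polynomial.C (a k) * PowerSeries.coeff n (f ^ k) := by
  rw [coeff_mkS]
  apply Finset.sum_subset (Finset.range_subset_range.mpr (by omega))
  intro k _ hk
  rw [Finset.mem_range, not_lt] at hk
  rw [coeff_pow_of_lt hf (by omega), mul_zero]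

lemma coeff_mkS_mul {f : A} (hf : PowerSeries.constantCoeff f = 0) (a : ℕ → ℚ) (g : A)
    (n : ℕ) :
    PowerSeries.coeff n (mkS a f * g) = ∑ k ∈ Finset.range (n + 1),
      Polynomial.C (a k) * PowerSeries.coeff n (f ^ k * g) := by
  rw [PowerSeries.coeff_mul]
  have h1 : ∀ p ∈ Finset.HasAntidiagonal.antidiagonal n,
      PowerSeries.coeff p.1 (mkS a f) * PowerSeries.coeff p.2 g
        = ∑ k ∈ Finset.range (n + 1),
            Polynomial.C (a k) * (PowerSeries.coeff p.1 (f ^ k) * PowerSeries.coeff p.2 g) := by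
    intro p hp
    rw [Finset.HasAntidiagonal.mem_antidiagonal] at hp
    rw [coeff_mkS_ext hf a (N := n + 1) (by omega), Finset.sum_mul]
    exact Finset.sum_congr rfl fun k _ => by ring
  rw [Finset.sum_congr rfl h1, Finset.sum_comm]
  refine Finset.sum_congr rfl fun k _ => ?_
  rw [PowerSeries.coeff_mul, Finset.mul_sum]

lemma DX_pow (f : A) (k : ℕ) : DX (f ^ (k + 1)) = ((k : A) + 1) * (f ^ k * DX f) := by
  induction k with
  | zero => simp [DX_mul]
  | succ k ih =>
    rw [pow_succ, DX_mul, ih]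
    push_cast
    ring

lemma constantCoeff_DX {f : A} (hf : PowerSeries.constantCoeff f = 0) :
    PowerSeries.constantCoeff (DX f) = 0 := by
  rw [← PowerSeries.coeff_zero_eq_constantCoeff, coeff_DX,
    PowerSeries.coeff_zero_eq_constantCoeff]
  rw [hf]; simp

lemma DX_mkS {f : A} (hf : PowerSeries.constantCoeff f = 0) (a : ℕ → ℚ) :
    DX (mkS a f) = mkS (fun k => (k + 1) * a (k + 1)) f * DX f := by
  have hDf := constantCoeff_DX hf
  apply PowerSeries.ext; intro n
  rw [coeff_DX, coeff_mkS, coeff_mkS_mul hf]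
  rw [derivative_sum]
  have hterm : ∀ k, derivative (Polynomial.C (a k) * PowerSeries.coeff n (f ^ k))
      = Polynomial.C (a k) * derivative (PowerSeries.coeff n (f ^ k)) := by
    intro k; rw [derivative_C_mul]
  simp only [hterm]
  have hcoeffpow : ∀ k : ℕ, derivative (PowerSeries.coeff n (f ^ (k + 1)))
      = ((k : ℚ[X]) + 1) * PowerSeries.coeff n (f ^ k * DX f) := by
    intro k
    rw [← coeff_DX, DX_pow]
    have : ((k : A) + 1) = PowerSeries.C ((k : ℚ[X]) + 1) := by
      push_cast; rw [map_add, map_one, map_natCast]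
    rw [this, PowerSeries.coeff_C_mul]
  rw [Finset.sum_range_succ' _ n]
  have h0 : derivative (PowerSeries.coeff n (f ^ 0)) = 0 := by
    rw [pow_zero, PowerSeries.coeff_one]
    split <;> simp
  rw [h0, mul_zero, add_zero]
  rw [Finset.sum_range_succ]
  have hlast : PowerSeries.coeff n (f ^ n * DX f) = 0 :=
    coeff_pow_mul_of_le hf hDf le_rfl
  rw [hlast, mul_zero, add_zero]
  apply Finset.sum_congr rfl
  intro k _
  rw [hcoeffpow k]
  simp only [map_mul, map_add, map_one, map_natCast]
  ring





lemma algQ (q : ℚ) : algebraMap ℚ (ℚ[X]) q = Polynomial.C q := by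
  rw [Polynomial.algebraMap_eq]

lemma expPS_eq (f : A) : expPS f = mkS (fun k => 1 / (k.factorial : ℚ)) f := by
  apply PowerSeries.ext; intro n
  simp [expPS, mkS, algQ]

lemma logOnePlus_eq (f : A) :
    logOnePlus f = mkS (fun k => (-1) ^ (k + 1) / (k : ℚ)) f := by
  apply PowerSeries.ext; intro n
  simp [logOnePlus, mkS, algQ]

lemma geomPS_eq (f : A) : geomPS f = mkS (fun _ => (1 : ℚ)) f := by
  apply PowerSeries.ext; intro n
  simp [geomPS, mkS]

lemma psi0Sum_eq (ℓ : ℕ) : psi0Sum ℓ = mkS (fun j => _root_.bernoulli j / (j : ℚ)) (Gu ℓ) := by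
  apply PowerSeries.ext; intro n
  simp [psi0Sum, mkS]

lemma BtildePS_eq (g : A) :
    BtildePS g = mkS (fun k => _root_.bernoulli (k + 1) / (((k : ℚ) + 1) * (k : ℚ))) g := by
  apply PowerSeries.ext; intro n
  rw [BtildePS, PowerSeries.coeff_mk, coeff_mkS, Finset.sum_range_succ' _ (n + 1)]
  simp only [Nat.cast_zero, zero_mul, div_zero, map_zero, zero_mul, add_zero]
  apply Finset.sum_congr rfl
  intro k _
  simp only [algQ, Nat.add_sub_cancel, Nat.cast_add, Nat.cast_one, add_sub_cancel_right]

lemma constantCoeff_mkS (a : ℕ → ℚ) (f : A) :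
    PowerSeries.constantCoeff (mkS a f) = Polynomial.C (a 0) := by
  rw [← PowerSeries.coeff_zero_eq_constantCoeff, coeff_mkS]
  simp

lemma geom_rec {f : A} (hf : PowerSeries.constantCoeff f = 0) :
    geomPS f = 1 + f * geomPS f := by
  rw [geomPS_eq, mul_comm f]
  apply PowerSeries.ext; intro n
  rw [map_add, coeff_mkS, coeff_mkS_mul hf, Finset.sum_range_succ' _ n]
  have h1 : ∀ k, f ^ k * f = f ^ (k + 1) := fun k => (pow_succ f k).symm
  simp only [h1, pow_zero, map_one, one_mul]
  rw [Finset.sum_range_succ, coeff_pow_of_lt hf (by omega : n < n + 1)]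
  ring

lemma geom_inv {f : A} (hf : PowerSeries.constantCoeff f = 0) :
    (1 - f) * geomPS f = 1 := by
  have h := geom_rec hf
  linear_combination h

lemma DX_geom {f : A} (hf : PowerSeries.constantCoeff f = 0) :
    DX (geomPS f) = geomPS f ^ 2 * DX f := by
  have h1 : DX (geomPS f) = DX f * geomPS f + f * DX (geomPS f) := by
    conv_lhs => rw [geom_rec hf]
    rw [DX_add, DX_one, DX_mul, zero_add]
  have h2 := geom_inv hf
  linear_combination geomPS f * h1 - DX (geomPS f) * h2
lemma coeff_neg_pow (g : A) (k n : ℕ) :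
    PowerSeries.coeff n ((-g) ^ k) = Polynomial.C ((-1 : ℚ) ^ k) * PowerSeries.coeff n (g ^ k) := by
  have h : (-g) ^ k = ((-1 : ℚ) ^ k) • g ^ k := by
    rw [← _root_.smul_pow, neg_one_smul]
  rw [h, PowerSeries.coeff_smul, Polynomial.smul_eq_C_mul]

lemma mkS_neg (a : ℕ → ℚ) (g : A) :
    mkS a (-g) = mkS (fun k => (-1) ^ k * a k) g := by
  apply PowerSeries.ext; intro n
  rw [coeff_mkS, coeff_mkS]
  apply Finset.sum_congr rfl
  intro k _
  rw [coeff_neg_pow, ← mul_assoc, ← map_mul]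
  ring_nf

lemma coeff_ofQ (w : PowerSeries ℚ) (n : ℕ) :
    PowerSeries.coeff n (ofQ w) = Polynomial.C (PowerSeries.coeff n w) := by
  simp [ofQ, PowerSeries.coeff_map, algQ]

lemma constantCoeff_ofQ (w : PowerSeries ℚ) :
    PowerSeries.constantCoeff (ofQ w) = Polynomial.C (PowerSeries.constantCoeff w) := by
  rw [← PowerSeries.coeff_zero_eq_constantCoeff, coeff_ofQ,
    PowerSeries.coeff_zero_eq_constantCoeff]

lemma DX_BtildePS_ofQ (w : PowerSeries ℚ) : DX (BtildePS (ofQ w)) = 0 := by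
  apply PowerSeries.ext; intro n
  rw [coeff_DX, BtildePS, PowerSeries.coeff_mk, derivative_sum, map_zero]
  apply Finset.sum_eq_zero
  intro r _
  rw [← map_pow, coeff_ofQ, algQ, ← map_mul, Polynomial.derivative_C]

-- constant coefficient computations
lemma ccoeff_eQ (ℓ : ℕ) (hℓ : 1 ≤ ℓ) : PowerSeries.constantCoeff (eQ ℓ) = 0 := by
  rw [eQ, map_mul]
  have h1 : PowerSeries.constantCoeff (R := ℚ) (PowerSeries.X ^ ℓ * (1 - PowerSeries.X ^ ℓ)) = 0 := by
    rw [map_mul, map_pow, PowerSeries.constantCoeff_X, zero_pow (by omega), zero_mul]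
  have h2 : PowerSeries.constantCoeff (lamQ ℓ) = 0 := by
    rw [lamQ, ← PowerSeries.coeff_zero_eq_constantCoeff, PowerSeries.coeff_smul,
      PowerSeries.coeff_zero_eq_constantCoeff, h1, smul_zero]
  rw [h2, zero_mul]

lemma ccoeff_XcE (ℓ : ℕ) (hℓ : 1 ≤ ℓ) :
    PowerSeries.constantCoeff (Xc * ofQ (eQ ℓ)) = 0 := by
  rw [map_mul, constantCoeff_ofQ, ccoeff_eQ ℓ hℓ, map_zero, mul_zero]

lemma ccoeff_negXcE (ℓ : ℕ) (hℓ : 1 ≤ ℓ) :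
    PowerSeries.constantCoeff (-(Xc * ofQ (eQ ℓ))) = 0 := by
  rw [map_neg, ccoeff_XcE ℓ hℓ, neg_zero]

lemma ccoeff_Gu (ℓ : ℕ) (hℓ : 1 ≤ ℓ) : PowerSeries.constantCoeff (Gu ℓ) = 0 := by
  rw [Gu, map_mul, constantCoeff_ofQ, ccoeff_eQ ℓ hℓ, map_zero, zero_mul]

lemma ccoeff_negGu (ℓ : ℕ) (hℓ : 1 ≤ ℓ) :
    PowerSeries.constantCoeff (-Gu ℓ) = 0 := by
  rw [map_neg, ccoeff_Gu ℓ hℓ, neg_zero]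

-- DX of basic pieces
lemma DX_XcE (ℓ : ℕ) : DX (Xc * ofQ (eQ ℓ)) = ofQ (eQ ℓ) := by
  rw [DX_mul, DX_Xc, DX_ofQ, one_mul, mul_zero, add_zero]

lemma DX_Gu (ℓ : ℕ) (hℓ : 1 ≤ ℓ) : DX (Gu ℓ) = Gu ℓ ^ 2 := by
  rw [Gu, DX_mul, DX_ofQ, zero_mul, zero_add, DX_geom (ccoeff_XcE ℓ hℓ), DX_XcE]
  ring

lemma DX_SPhi (ℓ : ℕ) : DX (SPhi ℓ) = geomPS (Xc * ofQ (eQ ℓ)) := by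
  apply PowerSeries.ext; intro n
  rw [coeff_DX, SPhi, PowerSeries.coeff_mk, derivative_sum, geomPS, PowerSeries.coeff_mk]
  rw [Finset.sum_range_succ' _ (n + 1)]
  have h0 : derivative (Polynomial.C (PowerSeries.coeff n (eQ ℓ ^ (0 - 1)) / ((0 : ℕ) : ℚ))
      * Polynomial.X ^ (0 : ℕ)) = 0 := by
    simp
  rw [h0, add_zero]
  apply Finset.sum_congr rfl
  intro k _
  rw [derivative_C_mul, derivative_X_pow]
  have hXcE : (Xc * ofQ (eQ ℓ)) ^ k = PowerSeries.C (Polynomial.X ^ k) * ofQ (eQ ℓ ^ k) := by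
    rw [mul_pow, Xc, ← map_pow, ← map_pow]
  rw [hXcE, PowerSeries.coeff_C_mul, coeff_ofQ]
  simp only [Nat.add_sub_cancel, Nat.cast_add, Nat.cast_one]
  have hk1 : ((k : ℚ) + 1) ≠ 0 := by positivity
  rw [← mul_assoc, ← map_mul, div_mul_cancel₀ _ hk1, mul_comm]


lemma DX_logOnePlus_ofQ (w : PowerSeries ℚ) : DX (logOnePlus (ofQ w)) = 0 := by
  apply PowerSeries.ext; intro n
  rw [coeff_DX, logOnePlus, PowerSeries.coeff_mk, derivative_sum, map_zero]
  apply Finset.sum_eq_zero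
  intro k _
  rw [← map_pow, coeff_ofQ, algQ, ← map_mul, Polynomial.derivative_C]

lemma DX_L1 (ℓ : ℕ) : DX (logOnePlus (ofQ (MQ ℓ) - 1)) = 0 := by
  have h : (ofQ (MQ ℓ) - 1 : A) = ofQ (MQ ℓ - 1) := by rw [map_sub, map_one]
  rw [h, DX_logOnePlus_ofQ]

lemma DX_logOnePlus {f : A} (hf : PowerSeries.constantCoeff f = 0) :
    DX (logOnePlus f) = geomPS (-f) * DX f := by
  rw [logOnePlus_eq, DX_mkS hf, geomPS_eq, mkS_neg]
  congr 1
  apply mkS_congr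
  intro k
  have hk : ((k : ℚ) + 1) ≠ 0 := by positivity
  push_cast
  rw [pow_succ, pow_succ]
  field_simp

lemma DX_L2 (ℓ : ℕ) (hℓ : 1 ≤ ℓ) :
    DX (logOnePlus (-(Xc * ofQ (eQ ℓ)))) = -(Gu ℓ) := by
  rw [DX_logOnePlus (ccoeff_negXcE ℓ hℓ), neg_neg, DX_neg, DX_XcE, Gu]
  ring

lemma bern_sign (k : ℕ) :
    ((-1 : ℚ) ^ k) * (_root_.bernoulli (k + 2) / ((k : ℚ) + 2))
      = _root_.bernoulli (k + 2) / ((k : ℚ) + 2) := by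
  rcases Nat.even_or_odd k with h | h
  · rw [h.neg_one_pow, one_mul]
  · have hodd : Odd (k + 2) := by rcases h with ⟨m, rfl⟩; exact ⟨m + 1, by ring⟩
    have hb : _root_.bernoulli (k + 2) = 0 := by
      rw [bernoulli_eq_bernoulli'_of_ne_one (by omega)]
      exact bernoulli'_eq_zero_of_odd hodd (by omega)
    rw [hb]
    simp

lemma DX_Btilde_neg_Gu (ℓ : ℕ) (hℓ : 1 ≤ ℓ) :
    DX (BtildePS (-(Gu ℓ)))
      = -(mkS (fun k => _root_.bernoulli (k + 2) / ((k : ℚ) + 2)) (-(Gu ℓ)) * Gu ℓ ^ 2) := by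
  rw [BtildePS_eq, DX_mkS (ccoeff_negGu ℓ hℓ), DX_neg, DX_Gu ℓ hℓ]
  trans (mkS (fun k => _root_.bernoulli (k + 2) / ((k : ℚ) + 2)) (-(Gu ℓ)) * (-(Gu ℓ ^ 2)))
  · congr 1
    apply mkS_congr
    intro k
    have hk : ((k : ℚ) + 1) ≠ 0 := by positivity
    push_cast
    rw [← div_div, mul_comm, div_mul_cancel₀ _ hk]
    congr 1
    ring
  · ring

lemma DX_psi0 (ℓ : ℕ) (hℓ : 1 ≤ ℓ) :
    DX (psi0Sum ℓ) = mkS (fun k => _root_.bernoulli (k + 1)) (Gu ℓ) * Gu ℓ ^ 2 := by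
  rw [psi0Sum_eq, DX_mkS (ccoeff_Gu ℓ hℓ), DX_Gu ℓ hℓ]
  congr 1
  apply mkS_congr
  intro k
  have hk : ((k : ℚ) + 1) ≠ 0 := by positivity
  push_cast
  field_simp

lemma geom_eq (ℓ : ℕ) (hℓ : 1 ≤ ℓ) :
    geomPS (Xc * ofQ (eQ ℓ)) = 1 + Xc * Gu ℓ := by
  have h := geom_rec (ccoeff_XcE ℓ hℓ)
  rw [Gu]
  linear_combination h

lemma ccoeff_logOnePlus (f : A) : PowerSeries.constantCoeff (logOnePlus f) = 0 := by
  rw [logOnePlus_eq, constantCoeff_mkS]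
  norm_num

lemma ccoeff_Btilde (g : A) : PowerSeries.constantCoeff (BtildePS g) = 0 := by
  rw [BtildePS_eq, constantCoeff_mkS]
  norm_num

lemma ccoeff_SPhi (ℓ : ℕ) : PowerSeries.constantCoeff (SPhi ℓ) = Polynomial.X := by
  rw [← PowerSeries.coeff_zero_eq_constantCoeff, SPhi, PowerSeries.coeff_mk]
  rw [Finset.sum_range_succ, Finset.sum_range_one]
  norm_num

lemma ccoeff_Xc : PowerSeries.constantCoeff Xc = Polynomial.X := by
  rw [Xc, PowerSeries.constantCoeff_C]

lemma ccoeff_PhiU (ℓ : ℕ) : PowerSeries.constantCoeff (PhiU ℓ) = 0 := by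
  rw [PhiU]
  simp only [map_add, map_sub, map_mul, map_one, ccoeff_logOnePlus, ccoeff_Btilde,
    ccoeff_SPhi, ccoeff_Xc]
  ring

lemma DX_Useries (ℓ : ℕ) : DX (Useries ℓ) = Useries ℓ * DX (PhiU ℓ) := by
  rw [Useries, expPS_eq, DX_mkS (ccoeff_PhiU ℓ)]
  congr 1
  apply mkS_congr
  intro k
  have hfac : ((k.factorial : ℚ)) ≠ 0 := Nat.cast_ne_zero.mpr k.factorial_ne_zero
  have hfac2 : (((k+1).factorial : ℚ)) ≠ 0 := Nat.cast_ne_zero.mpr (k+1).factorial_ne_zero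
  rw [Nat.factorial_succ]
  push_cast
  field_simp

lemma psi0_identity (ℓ : ℕ) (hℓ : 1 ≤ ℓ) :
    psi0Sum ℓ + algebraMap ℚ A (1 / 2) * Gu ℓ
      = mkS (fun k => _root_.bernoulli (k + 2) / ((k : ℚ) + 2)) (-(Gu ℓ)) * Gu ℓ ^ 2 := by
  apply PowerSeries.ext; intro n
  rw [map_add, psi0Sum_eq,
    coeff_mkS_ext (ccoeff_Gu ℓ hℓ) _ (show n < n + 3 by omega),
    coeff_mkS_mul (ccoeff_negGu ℓ hℓ)]
  have hhalf : PowerSeries.coeff n ((algebraMap ℚ A (1 / 2)) * Gu ℓ)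
      = Polynomial.C (1 / 2 : ℚ) * PowerSeries.coeff n (Gu ℓ) := by
    rw [PowerSeries.algebraMap_apply, PowerSeries.coeff_C_mul, algQ]
  rw [hhalf, Finset.sum_range_succ' _ (n + 2), Finset.sum_range_succ' _ (n + 1)]
  have hterm : ∀ k : ℕ,
      Polynomial.C (_root_.bernoulli (k + 2) / ((k : ℚ) + 2)) *
          PowerSeries.coeff n ((-(Gu ℓ)) ^ k * Gu ℓ ^ 2)
        = Polynomial.C (_root_.bernoulli (k + 1 + 1) / ((k + 1 + 1 : ℕ) : ℚ)) *
            PowerSeries.coeff n (Gu ℓ ^ (k + 1 + 1)) := by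
    intro k
    have hpow : (-(Gu ℓ)) ^ k * Gu ℓ ^ 2 = ((-1 : ℚ) ^ k) • (Gu ℓ ^ (k + 2)) := by
      rw [show (-(Gu ℓ)) = (-1 : ℚ) • Gu ℓ from (neg_one_smul ℚ (Gu ℓ)).symm,
        _root_.smul_pow, smul_mul_assoc, ← pow_add]
    rw [hpow, PowerSeries.coeff_smul, Polynomial.smul_eq_C_mul, ← mul_assoc, ← map_mul,
      mul_comm (_root_.bernoulli (k + 2) / ((k : ℚ) + 2)) ((-1 : ℚ) ^ k), bern_sign k]
    have : k + 1 + 1 = k + 2 := rfl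
    rw [this]
    push_cast
    ring_nf
  have hsum : ∑ k ∈ Finset.range (n + 1),
      Polynomial.C (_root_.bernoulli (k + 2) / ((k : ℚ) + 2)) *
        PowerSeries.coeff n ((-(Gu ℓ)) ^ k * Gu ℓ ^ 2)
      = ∑ k ∈ Finset.range (n + 1),
          Polynomial.C (_root_.bernoulli (k + 1 + 1) / ((k + 1 + 1 : ℕ) : ℚ)) *
            PowerSeries.coeff n (Gu ℓ ^ (k + 1 + 1)) :=
    Finset.sum_congr rfl fun k _ => hterm k
  rw [hsum]
  have hF0 : Polynomial.C (_root_.bernoulli 0 / ((0 : ℕ) : ℚ)) *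
      PowerSeries.coeff n (Gu ℓ ^ (0 : ℕ)) = 0 := by
    norm_num
  have hF1 : Polynomial.C (_root_.bernoulli (0 + 1) / ((0 + 1 : ℕ) : ℚ)) *
      PowerSeries.coeff n (Gu ℓ ^ (0 + 1)) = - (Polynomial.C (1 / 2 : ℚ) *
        PowerSeries.coeff n (Gu ℓ)) := by
    norm_num [_root_.bernoulli_one]
  rw [hF0, hF1]
  ring

lemma psi1_identity (ℓ : ℕ) (hℓ : 1 ≤ ℓ) :
    Gu ℓ + mkS (fun k => _root_.bernoulli (k + 1)) (Gu ℓ) * Gu ℓ ^ 2 = psi1Sum ℓ := by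
  apply PowerSeries.ext; intro n
  rw [map_add, coeff_mkS_mul (ccoeff_Gu ℓ hℓ), psi1Sum, PowerSeries.coeff_mk]
  have hext : ∑ j ∈ Finset.range (n + 1),
        Polynomial.C (_root_.bernoulli j) * PowerSeries.coeff n (Gu ℓ ^ (j + 1))
      = ∑ j ∈ Finset.range (n + 2),
          Polynomial.C (_root_.bernoulli j) * PowerSeries.coeff n (Gu ℓ ^ (j + 1)) := by
    apply Finset.sum_subset (Finset.range_subset_range.mpr (by omega))
    intro j _ hj
    rw [Finset.mem_range, not_lt] at hj
    rw [coeff_pow_of_lt (ccoeff_Gu ℓ hℓ) (by omega), mul_zero]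
  rw [hext, Finset.sum_range_succ' _ (n + 1)]
  have hterm : ∀ k : ℕ, Polynomial.C (_root_.bernoulli (k + 1)) *
      PowerSeries.coeff n (Gu ℓ ^ k * Gu ℓ ^ 2)
      = Polynomial.C (_root_.bernoulli (k + 1)) *
          PowerSeries.coeff n (Gu ℓ ^ (k + 1 + 1)) := by
    intro k
    rw [← pow_add]
  have hsum : ∑ k ∈ Finset.range (n + 1), Polynomial.C (_root_.bernoulli (k + 1)) *
        PowerSeries.coeff n (Gu ℓ ^ k * Gu ℓ ^ 2)
      = ∑ k ∈ Finset.range (n + 1), Polynomial.C (_root_.bernoulli (k + 1)) *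
          PowerSeries.coeff n (Gu ℓ ^ (k + 1 + 1)) :=
    Finset.sum_congr rfl fun k _ => hterm k
  rw [hsum]
  norm_num
  ring

lemma DX_PhiU (ℓ : ℕ) (hℓ : 1 ≤ ℓ) :
    DX (PhiU ℓ) = logOnePlus (ofQ (MQ ℓ) - 1) + logOnePlus (-(Xc * ofQ (eQ ℓ)))
      - psi0Sum ℓ := by
  have hBt2 : DX (BtildePS (-(ofQ (eQ ℓ)))) = 0 := by
    rw [show (-(ofQ (eQ ℓ)) : A) = ofQ (-(eQ ℓ)) from (map_neg ofQ _).symm, DX_BtildePS_ofQ]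
  rw [PhiU, show (ofQ (eQ ℓ) * geomPS (Xc * ofQ (eQ ℓ)) : A) = Gu ℓ from rfl]
  simp only [DX_sub, DX_add, DX_mul]
  rw [DX_Xc, DX_one, DX_algebraMap, DX_L1, DX_L2 ℓ hℓ, DX_SPhi, DX_Btilde_neg_Gu ℓ hℓ,
    hBt2, geom_eq ℓ hℓ]
  linear_combination psi0_identity ℓ hℓ
end St3

/-- `∂_X² U_ℓ(X,u) = ((log M + log(1-Xe) - ∑_{j≥1}(B_j/j)G^j)² - ∑_{j≥0}B_j G^{j+1})·U_ℓ(X,u)`,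
i.e. `∂_X² U_ℓ = ((log(λ_ℓ(E_ℓ-X)) + ψ₀(-E_ℓ+X))² + ψ₁(-E_ℓ+X))·U_ℓ`. -/
theorem statement3 (ℓ : ℕ) (hℓ : 1 ≤ ℓ) :
    DX (DX (Useries ℓ))
      = ((logOnePlus (ofQ (MQ ℓ) - 1) + logOnePlus (-(Xc * ofQ (eQ ℓ))) - psi0Sum ℓ) ^ 2
          - psi1Sum ℓ) * Useries ℓ := by
  have h1 : DX (Useries ℓ) = (logOnePlus (ofQ (MQ ℓ) - 1) + logOnePlus (-(Xc * ofQ (eQ ℓ)))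
      - psi0Sum ℓ) * Useries ℓ := by
    rw [St3.DX_Useries, St3.DX_PhiU ℓ hℓ]; ring
  have h2 : DX (logOnePlus (ofQ (MQ ℓ) - 1) + logOnePlus (-(Xc * ofQ (eQ ℓ))) - psi0Sum ℓ)
      = -(psi1Sum ℓ) := by
    rw [St3.DX_sub, St3.DX_add, St3.DX_L1, St3.DX_L2 ℓ hℓ, St3.DX_psi0 ℓ hℓ]
    linear_combination -(St3.psi1_identity ℓ hℓ)
  rw [h1, St3.DX_mul, h2, h1]
  ring

end
end

section
/- In ℚ⟦w⟧, with B̃(w) := ∑_{r≥2} (B_r/(r(r−1)))·w^{r−1}, one has ( ∑_{n≥0} ((−1)^n/(n+1))·w^n ) + (1/2)·log(1+w) − 1 + B̃(w/(1+w)) − B̃(w) = 0, where log(1+w) := ∑_{n≥1} (−1)^{n−1} w^n/n, and B̃(w/(1+w)) denotes the composition of B̃ with the power series w/(1+w) = ∑_{n≥1} (−1)^{n−1} w^n (which has zero constant term). This is the formal version, with w = 1/z, of the functional equation log Γ(z+1) − log Γ(z) = log z for Stirling's asymptotic expansion log Γ(z) ∼ (z−1/2)·log z − z + (1/2)·log(2π)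 + B̃(1/z). -/
open PowerSeries Finset

noncomputable section

/-- The composition `B̃(g) = ∑_{r≥2} (B_r/(r(r-1)))·g^{r-1}` for `g ∈ ℚ⟦w⟧` with zero
constant term (truncated sum; valid since `coeff n (g^{r-1}) = 0` for `r-1 > n`).
`bernoulli` is Mathlib's Bernoulli number with `B₁ = -1/2`. -/
def BtildeComp (g : PowerSeries ℚ) : PowerSeries ℚ :=
  PowerSeries.mk fun n => ∑ r ∈ Finset.range (n + 2),
    (bernoulli r / ((r : ℚ) * ((r : ℚ) - 1))) * PowerSeries.coeff n (g ^ (r - 1))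

lemma onePlusX_ne_zero : (1 + X : ℚ⟦X⟧) ≠ 0 := fun h => by
  have := congrArg (constantCoeff) h
  simp at this

lemma g_pow (k : ℕ) :
    (X * (1 + X)⁻¹ : ℚ⟦X⟧) ^ (k + 1) =
      PowerSeries.mk (fun n => if k + 1 ≤ n then
        (-1 : ℚ) ^ (n - (k + 1)) * ((n - 1).choose k : ℚ) else 0) := by
  have hc : constantCoeff (1 + X : ℚ⟦X⟧) ≠ 0 := by simp
  have hu : (1 + X : ℚ⟦X⟧) * (1 + X)⁻¹ = 1 := PowerSeries.mul_inv_cancel _ hc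
  have hgx : (1 + X : ℚ⟦X⟧) * (X * (1 + X)⁻¹) = X := by
    rw [show (1 + X : ℚ⟦X⟧) * (X * (1 + X)⁻¹) = X * ((1 + X) * (1 + X)⁻¹) by ring, hu, mul_one]
  induction k with
  | zero =>
      apply mul_left_cancel₀ onePlusX_ne_zero
      rw [pow_one, hgx]
      ext n
      rw [add_mul, one_mul, map_add]
      cases n with
      | zero => simp
      | succ n =>
          rw [coeff_succ_X_mul, coeff_mk, coeff_mk, PowerSeries.coeff_X]
          cases n with
          | zero => norm_num
          | succ n =>
              simp only [Nat.le_add_left, if_pos, Nat.add_sub_cancel, Nat.choose_zero_right]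
              rw [if_neg (by omega)]
              push_cast
              ring
  | succ k ih =>
      apply mul_left_cancel₀ onePlusX_ne_zero
      have l1 : (1 + X : ℚ⟦X⟧) * (X * (1 + X)⁻¹) ^ (k + 1 + 1)
          = X * PowerSeries.mk (fun n => if k + 1 ≤ n then
              (-1 : ℚ) ^ (n - (k + 1)) * ((n - 1).choose k : ℚ) else 0) := by
        rw [pow_succ, show (1 + X : ℚ⟦X⟧) * ((X * (1 + X)⁻¹) ^ (k + 1) * (X * (1 + X)⁻¹))
          = ((1 + X) * (X * (1 + X)⁻¹)) * (X * (1 + X)⁻¹) ^ (k + 1) by ring, hgx, ih]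
      rw [l1]
      ext n
      rw [add_mul, one_mul, map_add]
      cases n with
      | zero => simp
      | succ n =>
          rw [coeff_succ_X_mul, coeff_succ_X_mul, coeff_mk, coeff_mk, coeff_mk]
          rcases lt_trichotomy n (k + 1) with h | h | h
          · rw [if_neg (by omega), if_neg (by omega), if_neg (by omega)]
            norm_num
          · subst h
            rw [if_pos le_rfl, if_pos (by omega), if_neg (by omega)]
            simp [Nat.sub_self]
          · obtain ⟨t, rfl⟩ : ∃ t, n = k + 2 + t := ⟨n - (k + 2), by omega⟩
            rw [if_pos (by omega), if_pos (by omega), if_pos (by omega)]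
            have e1 : k + 2 + t - (k + 1) = t + 1 := by omega
            have e2 : k + 2 + t + 1 - (k + 1 + 1) = t + 1 := by omega
            have e3 : k + 2 + t - (k + 1 + 1) = t := by omega
            have e4 : k + 2 + t + 1 - 1 = k + t + 2 := by omega
            have e5 : k + 2 + t - 1 = k + t + 1 := by omega
            rw [e1, e2, e3, e4, e5]
            have pas : (k + t + 2).choose (k + 1) = (k + t + 1).choose k + (k + t + 1).choose (k + 1) := by
              rw [show k + t + 2 = (k + t + 1) + 1 by omega, Nat.choose_succ_succ']
            rw [pas]
            push_cast
            ring

lemma key_sum (m : ℕ) :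
    ∑ j ∈ range (m + 1), ((m + 2).choose (j + 2) : ℚ) * bernoulli' (j + 2)
      = ((m : ℚ) + 2) / 2 - 1 + bernoulli' (m + 2) := by
  have hs := sum_bernoulli' (m + 2)
  rw [show m + 2 = (m + 1) + 1 from rfl, Finset.sum_range_succ'] at hs
  rw [show m + 1 = m + 1 from rfl, Finset.sum_range_succ'] at hs
  rw [Finset.sum_range_succ]
  simp only [Nat.choose_zero_right, Nat.cast_one, one_mul, bernoulli'_zero,
    Nat.choose_one_right, bernoulli'_one, Nat.choose_self,
    show ∀ k : ℕ, k + 1 + 1 = k + 2 from fun _ => rfl] at hs ⊢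
  rw [Nat.choose_one_right, bernoulli'_one] at hs
  push_cast at hs ⊢
  linarith

lemma term_eq (m j : ℕ) (hj : j ≤ m) (b' : ℚ) (hb' : b' = bernoulli' (j + 2)) :
    bernoulli (j + 2) / (((j + 2 : ℕ) : ℚ) * (((j + 2 : ℕ) : ℚ) - 1)) *
        ((-1 : ℚ) ^ (m - j) * ((m.choose j : ℕ) : ℚ))
      = (-1 : ℚ) ^ m / (((m : ℚ) + 1) * ((m : ℚ) + 2)) *
          (((m + 2).choose (j + 2) : ℚ) * bernoulli' (j + 2)) := by
  have h1 : (-1 : ℚ) ^ (m - j) * (-1 : ℚ) ^ j = (-1 : ℚ) ^ m := by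
    rw [← pow_add, Nat.sub_add_cancel hj]
  have h2 : (-1 : ℚ) ^ j * (-1 : ℚ) ^ j = 1 := by
    rw [← pow_add, ← two_mul, pow_mul]; norm_num
  have h3 : (-1 : ℚ) ^ (m - j) = (-1 : ℚ) ^ m * (-1 : ℚ) ^ j := by
    rw [← h1, mul_assoc, h2, mul_one]
  have hb : bernoulli (j + 2) = (-1 : ℚ) ^ (j + 2) * bernoulli' (j + 2) := rfl
  have h4 : (-1 : ℚ) ^ (j + 2) * (-1 : ℚ) ^ j = 1 := by
    rw [← pow_add, show j + 2 + j = 2 * (j + 1) by omega, pow_mul]; norm_num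
  have hch : ((m : ℚ) + 1) * ((m : ℚ) + 2) * (m.choose j : ℚ)
      = ((j : ℚ) + 1) * ((j : ℚ) + 2) * (((m + 2).choose (j + 2) : ℕ) : ℚ) := by
    have hn : (m + 1) * ((m + 2) * m.choose j) = (j + 1) * ((j + 2) * (m + 2).choose (j + 2)) := by
      have a := Nat.add_one_mul_choose_eq m j
      have b := Nat.add_one_mul_choose_eq (m + 1) (j + 1)
      try simp only [Nat.succ_eq_add_one] at a b
      calc (m + 1) * ((m + 2) * m.choose j) = (m + 2) * ((m + 1) * m.choose j) := by ring
        _ = (m + 2) * ((m + 1).choose (j + 1) * (j + 1)) := by rw [a]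
        _ = (j + 1) * ((m + 2) * (m + 1).choose (j + 1)) := by ring
        _ = (j + 1) * ((m + 2).choose (j + 2) * (j + 2)) := by rw [b]
        _ = (j + 1) * ((j + 2) * (m + 2).choose (j + 2)) := by ring
    have := congrArg (fun x : ℕ => (x : ℚ)) hn
    push_cast at this
    push_cast
    linarith
  have hs2 : (-1 : ℚ) ^ (j + 2) = (-1 : ℚ) ^ j := by rw [pow_add]; norm_num
  rw [hb, h3, hs2, ← hb']
  push_cast
  have hj1 : (j : ℚ) + 1 ≠ 0 := by positivity
  have hj2 : (j : ℚ) + 2 ≠ 0 := by positivity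
  have hm1 : (m : ℚ) + 1 ≠ 0 := by positivity
  have hm2 : (m : ℚ) + 2 ≠ 0 := by positivity
  have e1 : ((j:ℚ) + 2) - 1 = (j:ℚ) + 1 := by ring
  rw [e1]
  field_simp
  push_cast at hch
  linear_combination (b' * (m.choose j : ℚ) * (((m:ℚ)+1) * ((m:ℚ)+2))) * h2 +
    (b') * hch

lemma coeff_log (m : ℕ) :
    coeff (m + 1) (logOnePlus (X : ℚ⟦X⟧)) = (-1 : ℚ) ^ (m + 2) / ((m : ℚ) + 1) := by
  simp only [logOnePlus, coeff_mk, Algebra.algebraMap_self, RingHom.id_apply]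
  rw [Finset.sum_eq_single_of_mem (m + 1) (self_mem_range_succ (m + 1))]
  · rw [coeff_X_pow, if_pos rfl, mul_one]
    push_cast; ring
  · intro b _ hb
    rw [coeff_X_pow, if_neg (fun h => hb h.symm), mul_zero]

lemma coeff_Btilde_X (m : ℕ) :
    coeff (m + 1) (BtildeComp X) =
      bernoulli (m + 2) / ((((m : ℚ) + 2)) * (((m : ℚ) + 2) - 1)) := by
  simp only [BtildeComp, coeff_mk]
  rw [Finset.sum_eq_single_of_mem (m + 2) (by simp [Finset.mem_range])]
  · rw [show m + 2 - 1 = m + 1 from rfl, coeff_X_pow, if_pos rfl, mul_one]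
    push_cast; ring
  · intro b _ hb
    rw [coeff_X_pow, if_neg (by omega), mul_zero]

lemma coeff_Btilde_g (m : ℕ) :
    coeff (m + 1) (BtildeComp (X * (1 + X)⁻¹)) =
      (-1 : ℚ) ^ m / (((m : ℚ) + 1) * ((m : ℚ) + 2)) *
        (((m : ℚ) + 2) / 2 - 1 + bernoulli' (m + 2)) := by
  simp only [BtildeComp, coeff_mk]
  rw [show m + 1 + 2 = (m + 2) + 1 from rfl, Finset.sum_range_succ',
    show m + 2 = (m + 1) + 1 from rfl, Finset.sum_range_succ']
  have f0 : (bernoulli 0 / (((0 : ℕ) : ℚ) * (((0 : ℕ) : ℚ) - 1)) *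
      coeff (m + 1) ((X * (1 + X)⁻¹) ^ (0 - 1))) = 0 := by
    norm_num
  have f1 : (bernoulli 1 / (((1 : ℕ) : ℚ) * (((1 : ℕ) : ℚ) - 1)) *
      coeff (m + 1) ((X * (1 + X)⁻¹) ^ (1 - 1))) = 0 := by
    norm_num
  rw [f0, f1, add_zero, add_zero]
  have hterm : ∀ j ∈ range (m + 1),
      bernoulli (j + 1 + 1) / ((((j + 1 + 1 : ℕ)) : ℚ) * ((((j + 1 + 1 : ℕ)) : ℚ) - 1)) *
          coeff (m + 1) ((X * (1 + X)⁻¹) ^ (j + 1 + 1 - 1))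
        = (-1 : ℚ) ^ m / (((m : ℚ) + 1) * ((m : ℚ) + 2)) *
            (((m + 2).choose (j + 2) : ℚ) * bernoulli' (j + 2)) := by
    intro j hj
    rw [Finset.mem_range] at hj
    rw [show j + 1 + 1 - 1 = j + 1 from rfl, g_pow j, coeff_mk,
      if_pos (by omega : j + 1 ≤ m + 1),
      show m + 1 - (j + 1) = m - j by omega, show m + 1 - 1 = m from rfl,
      show j + 1 + 1 = j + 2 from rfl]
    exact term_eq m j (by omega) _ rfl
  rw [Finset.sum_congr rfl hterm, ← Finset.mul_sum, key_sum]

/-- in `ℚ⟦w⟧`,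
`(∑_{n≥0} ((-1)^n/(n+1))·wⁿ) + (1/2)·log(1+w) - 1 + B̃(w/(1+w)) - B̃(w) = 0`,
where `w/(1+w) = X·(1+X)⁻¹` has zero constant term.  This is the formal version, with
`w = 1/z`, of `log Γ(z+1) - log Γ(z) = log z` for Stirling's expansion. -/
theorem statement8 :
    (PowerSeries.mk fun n => ((-1) ^ n / ((n : ℚ) + 1) : ℚ))
        + PowerSeries.C (1 / 2 : ℚ) * logOnePlus (PowerSeries.X : PowerSeries ℚ) - 1
        + BtildeComp (PowerSeries.X * (1 + PowerSeries.X)⁻¹)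
        - BtildeComp PowerSeries.X
      = 0 := by
  ext n
  rw [map_zero, map_sub, map_add, map_sub, map_add, coeff_mk, coeff_C_mul]
  cases n with
  | zero =>
      simp only [BtildeComp, logOnePlus, coeff_mk, Algebra.algebraMap_self, RingHom.id_apply]
      norm_num [Finset.sum_range_succ, coeff_one]
  | succ m =>
      rw [coeff_log, coeff_Btilde_X, coeff_Btilde_g, coeff_one, if_neg (by omega)]
      have hb : bernoulli (m + 2) = (-1 : ℚ) ^ (m + 2) * bernoulli' (m + 2) := rfl
      rw [hb]
      have hm1 : (m : ℚ) + 1 ≠ 0 := by positivity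
      have hm2 : (m : ℚ) + 2 ≠ 0 := by positivity
      have h3 : (2 : ℚ) + (m : ℚ) * 3 + (m : ℚ) ^ 2 ≠ 0 := by positivity
      push_cast
      rw [show (m : ℚ) + 1 + 1 = (m : ℚ) + 2 by ring, show (m : ℚ) + 2 - 1 = (m : ℚ) + 1 by ring]
      field_simp
      ring

end
end
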